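/- Let H be a separable infinite-dimensional complex Hilbert space and let {f_n}_{n=0}^∞ be a Bessel sequence in H, i.e., there is a constant C > 0 with ∑_{n=0}^∞ |⟨f, f_n⟩|² ≤ C‖f‖² for all f ∈ H. Then {f_n} is a CFC sequence (there exists a bounded linear operator B on H such that {B f_n} is a Parseval frame for H) if and only if there exist an infinite-dimensional linear subspace D ⊆ H and a constant A > 0 such that A‖f‖² ≤ ∑_{n=0}^∞ |⟨f, f_n⟩|² for every f ∈ D. -/

import Mathlib

/-!
If `{B fₙ}` is a Parseval frame, then `∑ |⟪B* f, fₙ⟫|² = ‖f‖²`, so `B*` is injective and the lower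
bound holds on its infinite-dimensional range with `A = (‖B*‖² + 1)⁻¹`.

Conversely, the analysis operator `T f = (⟪fₙ, f⟫)ₙ` of the Bessel sequence is bounded below on the
closure `K` of `D`, so it maps `K` isomorphically onto a closed, separable, infinite-dimensional
subspace of `ℓ²`. That subspace is isometric to `H`, as both have a Hilbert basis indexed by `ℕ`;
pulling the isometry back through `T` gives `V : H →L K` with `‖T (V f)‖ = ‖f‖`, and `B = V*`.
-/

open scoped ComplexInnerProductSpace InnerProductSpace

section HilbertBasis

variable {𝕜 E F : Type*} [RCLike 𝕜]
  [NormedAddCommGroup E] [InnerProductSpace 𝕜 E] [NormedAddCommGroup F] [InnerProductSpace 𝕜 F]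

theorem Orthonormal.countable [TopologicalSpace.SeparableSpace E] {ι : Type*} {v : ι → E}
    (hv : Orthonormal 𝕜 v) : Countable ι := by
  refine Pairwise.countable_of_isOpen_disjoint (s := fun i => Metric.ball (v i) (1 / 2))
    (fun i j hij => Metric.ball_disjoint_ball ?_) (fun _ => Metric.isOpen_ball)
    (fun _ => Metric.nonempty_ball.2 (by norm_num))
  have h2 : ‖v i - v j‖ ^ 2 = 2 := by
    rw [@norm_sub_sq 𝕜, hv.inner_eq_zero hij, hv.norm_eq_one, hv.norm_eq_one]
    norm_num
  rw [dist_eq_norm]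
  nlinarith [norm_nonneg (v i - v j)]

variable [CompleteSpace E] [TopologicalSpace.SeparableSpace E]

theorem nonempty_hilbertBasis_nat (hE : ¬ FiniteDimensional 𝕜 E) :
    Nonempty (HilbertBasis ℕ 𝕜 E) := by
  obtain ⟨w, b, -⟩ := exists_hilbertBasis 𝕜 E
  have : Countable w := b.orthonormal.countable
  have : Infinite w := by
    by_contra hw
    have : Fintype w := @Fintype.ofFinite _ (not_infinite_iff_finite.mp hw)
    exact hE (Module.Finite.of_basis b.toOrthonormalBasis.toBasis)
  obtain ⟨_⟩ : Nonempty (Denumerable w) := nonempty_denumerable_iff.2 ⟨‹_›, ‹_›⟩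
  let e := (Denumerable.eqv w).symm
  refine ⟨HilbertBasis.mk (b.orthonormal.comp e e.injective) ?_⟩
  rw [Set.range_comp, e.surjective.range_eq, Set.image_univ, b.dense_span]

theorem nonempty_linearIsometryEquiv_of_not_finiteDimensional [CompleteSpace F]
    [TopologicalSpace.SeparableSpace F] (hE : ¬ FiniteDimensional 𝕜 E)
    (hF : ¬ FiniteDimensional 𝕜 F) : Nonempty (E ≃ₗᵢ[𝕜] F) := by
  obtain ⟨bE⟩ := nonempty_hilbertBasis_nat hE
  obtain ⟨bF⟩ := nonempty_hilbertBasis_nat hF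
  exact ⟨bE.repr.trans bF.repr.symm⟩

theorem exists_norm_comp_eq_norm_of_antilipschitz {K : Type*} [NormedAddCommGroup K]
    [InnerProductSpace 𝕜 K] [CompleteSpace K] [TopologicalSpace.SeparableSpace K]
    [CompleteSpace F]
    (hE : ¬ FiniteDimensional 𝕜 E) (hK : ¬ FiniteDimensional 𝕜 K)
    (S : K →L[𝕜] F) {c : NNReal} (hS : AntilipschitzWith c S) :
    ∃ V : E →L[𝕜] K, ∀ f, ‖S (V f)‖ = ‖f‖ := by
  let e := S.equivRange hS.injective (hS.isClosed_range S.uniformContinuous)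
  have : CompleteSpace S.range :=
    (hS.isClosed_range S.uniformContinuous).completeSpace_coe
  have : TopologicalSpace.SeparableSpace S.range :=
    e.surjective.denseRange.separableSpace e.continuous
  have hR : ¬ FiniteDimensional 𝕜 S.range := fun _ =>
    hK e.toLinearEquiv.symm.finiteDimensional
  obtain ⟨w⟩ := nonempty_linearIsometryEquiv_of_not_finiteDimensional hE hR
  refine ⟨e.symm.toContinuousLinearMap.comp w.toContinuousLinearEquiv.toContinuousLinearMap,
    fun f => ?_⟩
  have hSe : ∀ y, S (e.symm y) = y := fun y =>
    congrArg Subtype.val (e.apply_symm_apply y)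
  show ‖S (e.symm (w f))‖ = ‖f‖
  rw [hSe]
  exact w.norm_map f

end HilbertBasis

theorem lp.hasSum_norm_sq {ι : Type*} {G : ι → Type*} [∀ i, NormedAddCommGroup (G i)]
    (x : lp G 2) : HasSum (fun i => ‖x i‖ ^ 2) (‖x‖ ^ 2) := by
  have h := lp.hasSum_norm (p := 2) (by norm_num) x
  simp only [ENNReal.toReal_ofNat, Real.rpow_two] at h
  exact h

section Frames

variable (𝕜 : Type*) {E F ι : Type*} [RCLike 𝕜]
  [NormedAddCommGroup E] [InnerProductSpace 𝕜 E] [NormedAddCommGroup F] [InnerProductSpace 𝕜 F]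

def IsBesselSequence (v : ι → E) (C : ℝ) : Prop :=
  ∀ f : E, Summable (fun i => ‖⟪f, v i⟫_𝕜‖ ^ 2) ∧ ∑' i, ‖⟪f, v i⟫_𝕜‖ ^ 2 ≤ C * ‖f‖ ^ 2

def IsParsevalFrame (v : ι → E) : Prop :=
  ∀ f : E, HasSum (fun i => ‖⟪f, v i⟫_𝕜‖ ^ 2) (‖f‖ ^ 2)

variable {𝕜} {v : ι → E} {C : ℝ}

namespace IsBesselSequence

theorem memℓp_inner (hv : IsBesselSequence 𝕜 v C) (f : E) :
    Memℓp (fun i => ⟪v i, f⟫_𝕜) 2 :=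
  memℓp_gen <| by simpa [norm_inner_symm (v _) f] using (hv f).1

noncomputable def analysisOperator (hv : IsBesselSequence 𝕜 v C) :
    E →L[𝕜] lp (fun _ : ι => 𝕜) 2 :=
  LinearMap.mkContinuous
    { toFun := fun f => ⟨fun i => ⟪v i, f⟫_𝕜, hv.memℓp_inner f⟩
      map_add' := fun f g => Subtype.ext <| funext fun i => inner_add_right _ _ _
      map_smul' := fun c f => Subtype.ext <| funext fun i => inner_smul_right _ _ _ }
    √C fun f => by
      have hsq :=
        (lp.hasSum_norm_sq (⟨_, hv.memℓp_inner f⟩ : lp (fun _ : ι => 𝕜) 2)).tsum_eq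
      simp only [norm_inner_symm (v _) f] at hsq
      rw [← Real.sqrt_sq (norm_nonneg f), ← Real.sqrt_mul' _ (sq_nonneg _)]
      exact Real.le_sqrt_of_sq_le (hsq ▸ (hv f).2)

@[simp]
theorem analysisOperator_apply (hv : IsBesselSequence 𝕜 v C) (f : E) (i : ι) :
    hv.analysisOperator f i = ⟪v i, f⟫_𝕜 :=
  rfl

theorem hasSum_norm_inner_sq (hv : IsBesselSequence 𝕜 v C) (f : E) :
    HasSum (fun i => ‖⟪f, v i⟫_𝕜‖ ^ 2) (‖hv.analysisOperator f‖ ^ 2) := by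
  simpa [norm_inner_symm (v _) f] using lp.hasSum_norm_sq (hv.analysisOperator f)

end IsBesselSequence

theorem isParsevalFrame_map_iff [CompleteSpace E] [CompleteSpace F] (B : E →L[𝕜] F) :
    IsParsevalFrame 𝕜 (fun i => B (v i)) ↔
      ∀ f : F, HasSum (fun i => ‖⟪B.adjoint f, v i⟫_𝕜‖ ^ 2) (‖f‖ ^ 2) := by
  simp only [IsParsevalFrame, ContinuousLinearMap.adjoint_inner_left]

theorem IsParsevalFrame.exists_lower_bound_of_map [CompleteSpace E] [CompleteSpace F]
    (hF : ¬ FiniteDimensional 𝕜 F) {B : E →L[𝕜] F}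
    (hB : IsParsevalFrame 𝕜 (fun i => B (v i))) :
    ∃ D : Submodule 𝕜 E, ¬ FiniteDimensional 𝕜 D ∧
      ∃ A : ℝ, 0 < A ∧ ∀ f ∈ D, A * ‖f‖ ^ 2 ≤ ∑' i, ‖⟪f, v i⟫_𝕜‖ ^ 2 := by
  rw [isParsevalFrame_map_iff] at hB
  have hinj : Function.Injective B.adjoint := by
    refine (injective_iff_map_eq_zero _).2 fun f hf => ?_
    simpa [hf, eq_comm] using (hB f).tsum_eq
  refine ⟨LinearMap.range (B.adjoint : F →ₗ[𝕜] E),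
    fun _ => hF (LinearEquiv.ofInjective _ hinj).symm.finiteDimensional,
    (‖B.adjoint‖ ^ 2 + 1)⁻¹, by positivity, ?_⟩
  rintro _ ⟨f, rfl⟩
  rw [ContinuousLinearMap.coe_coe, (hB f).tsum_eq, inv_mul_le_iff₀ (by positivity)]
  calc ‖B.adjoint f‖ ^ 2 ≤ (‖B.adjoint‖ * ‖f‖) ^ 2 := by gcongr; exact B.adjoint.le_opNorm f
    _ ≤ (‖B.adjoint‖ ^ 2 + 1) * ‖f‖ ^ 2 := by nlinarith [sq_nonneg ‖f‖]

theorem IsBesselSequence.exists_isParsevalFrame_map [CompleteSpace E]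
    [TopologicalSpace.SeparableSpace E] [CompleteSpace F] [TopologicalSpace.SeparableSpace F]
    (hF : ¬ FiniteDimensional 𝕜 F) (hv : IsBesselSequence 𝕜 v C) {D : Submodule 𝕜 E}
    (hD : ¬ FiniteDimensional 𝕜 D) {A : ℝ} (hA : 0 < A)
    (hDA : ∀ f ∈ D, A * ‖f‖ ^ 2 ≤ ∑' i, ‖⟪f, v i⟫_𝕜‖ ^ 2) :
    ∃ B : E →L[𝕜] F, IsParsevalFrame 𝕜 (fun i => B (v i)) := by
  set T := hv.analysisOperator
  set K := D.topologicalClosure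
  have hK : ¬ FiniteDimensional 𝕜 K := fun _ => hD <|
    FiniteDimensional.of_injective (Submodule.inclusion D.le_topologicalClosure)
      (Submodule.inclusion_injective _)
  have hKA : ∀ f ∈ K, A * ‖f‖ ^ 2 ≤ ‖T f‖ ^ 2 := by
    have hclosed : IsClosed {f : E | A * ‖f‖ ^ 2 ≤ ‖T f‖ ^ 2} :=
      isClosed_le (by fun_prop) (by fun_prop)
    refine fun f hf => closure_minimal (fun g hg => ?_) hclosed hf
    rw [Set.mem_ofPred_eq, ← (hv.hasSum_norm_inner_sq g).tsum_eq]
    exact hDA g hg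
  have hanti : AntilipschitzWith (√A⁻¹).toNNReal (T.comp K.subtypeL) := by
    refine ContinuousLinearMap.antilipschitz_of_bound _ fun f => ?_
    show ‖(f : E)‖ ≤ _ * ‖T f‖
    rw [Real.coe_toNNReal _ (Real.sqrt_nonneg _), ← Real.sqrt_sq (norm_nonneg (T f)),
      ← Real.sqrt_mul' _ (sq_nonneg _)]
    exact Real.le_sqrt_of_sq_le ((le_inv_mul_iff₀ hA).2 (hKA f f.2))
  obtain ⟨V, hV⟩ := exists_norm_comp_eq_norm_of_antilipschitz hF hK _ hanti
  refine ⟨(K.subtypeL.comp V).adjoint, ?_⟩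
  rw [isParsevalFrame_map_iff, ContinuousLinearMap.adjoint_adjoint]
  intro g
  rw [← hV g]
  exact hv.hasSum_norm_inner_sq (V g)

end Frames

theorem stmt5_general {H : Type*} [NormedAddCommGroup H] [InnerProductSpace ℂ H]
    [CompleteSpace H] [TopologicalSpace.SeparableSpace H]
    (hH : ¬ FiniteDimensional ℂ H) (fseq : ℕ → H)
    (C : ℝ)
    (hBessel : ∀ f : H, Summable (fun n => ‖⟪f, fseq n⟫‖ ^ 2) ∧
      ∑' n, ‖⟪f, fseq n⟫‖ ^ 2 ≤ C * ‖f‖ ^ 2) :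
    (∃ B : H →L[ℂ] H, ∀ f : H, HasSum (fun n => ‖⟪f, B (fseq n)⟫‖ ^ 2) (‖f‖ ^ 2)) ↔
      ∃ D : Submodule ℂ H, ¬ FiniteDimensional ℂ D ∧
        ∃ A : ℝ, 0 < A ∧ ∀ f ∈ D, A * ‖f‖ ^ 2 ≤ ∑' n, ‖⟪f, fseq n⟫‖ ^ 2 := by
  exact ⟨fun ⟨_, hB⟩ => IsParsevalFrame.exists_lower_bound_of_map hH hB,
    fun ⟨_, hD, _, hA, hDA⟩ => IsBesselSequence.exists_isParsevalFrame_map hH hBessel hD hA hDA⟩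

/-- For a Bessel sequence `{f_n}` in `H`, `{f_n}` is a CFC sequence iff there
exist an infinite-dimensional subspace `D ⊆ H` and `A > 0` with
`A‖f‖² ≤ ∑ |⟨f, f_n⟩|²` for all `f ∈ D`. -/
theorem stmt5 {H : Type*} [NormedAddCommGroup H] [InnerProductSpace ℂ H]
    [CompleteSpace H] [TopologicalSpace.SeparableSpace H]
    (hH : ¬ FiniteDimensional ℂ H) (fseq : ℕ → H)
    (C : ℝ) (hC : 0 < C)
    (hBessel : ∀ f : H, Summable (fun n => ‖⟪f, fseq n⟫‖ ^ 2) ∧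
      ∑' n, ‖⟪f, fseq n⟫‖ ^ 2 ≤ C * ‖f‖ ^ 2) :
    (∃ B : H →L[ℂ] H, ∀ f : H, HasSum (fun n => ‖⟪f, B (fseq n)⟫‖ ^ 2) (‖f‖ ^ 2)) ↔
      ∃ D : Submodule ℂ H, ¬ FiniteDimensional ℂ D ∧
        ∃ A : ℝ, 0 < A ∧ ∀ f ∈ D, A * ‖f‖ ^ 2 ≤ ∑' n, ‖⟪f, fseq n⟫‖ ^ 2 :=
  stmt5_general hH fseq C hBessel
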